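/- arXiv:1507.04647 — 3 statements merged into one kernel-verified Lean document; each statement's English description precedes it below -/
import Mathlib

section
/- Let d = (d_1, ..., d_n) be a non-increasing sequence of positive integers with even sum at most 2n - 2, and let k ∈ [n]. If there exists a forest F with vertex set {u_1, ..., u_n}, d_F(u_i) = d_i for all i, such that D = {u_1, ..., u_k} is an independent dominating set, then Σ_{i=1}^k d_i ≥ n - k and 0 ≤ Σ_{i=k+1}^n d_i - Σ_{i=1}^k d_i ≤ max{0, 2(n_{≥2}(d) - k) - 2}. -/
/-
Since `D` is independent, every edge at a vertex of `D` goes to `C = Dᶜ`, so `Σ_{i ≤ k} d_i`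
counts the `D`–`C` edges, and domination gives every vertex of `C` at least one of them: this is
`Σ_{i ≤ k} d_i ≥ |C| = n - k`. The excess `Σ_{i > k} d_i - Σ_{i ≤ k} d_i` is twice the number of
edges of the forest `F[C]`. A forest with an edge has fewer edges than non-isolated vertices, and a
non-isolated vertex of `F[C]` also has a neighbour in `D`, so its degree is at least `2`; as `d` is
non-increasing, it is one of the `n_{≥2}(d) - k` vertices `u_{k+1}, …, u_{n_{≥2}(d)}`.
-/

open Finset

/-- The degree of a vertex in a simple graph. -/
noncomputable def deg {V : Type*} (G : SimpleGraph V) (v : V) : ℕ := Nat.card {u // G.Adj v u}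

/-- `D` is a dominating set of `G`. -/
def DomSet {V : Type*} (G : SimpleGraph V) (D : Set V) : Prop := ∀ v ∉ D, ∃ u ∈ D, G.Adj u v

/-- `S` is an independent set of `G`. -/
def IndepSet {V : Type*} (G : SimpleGraph V) (S : Set V) : Prop :=
  ∀ u ∈ S, ∀ v ∈ S, ¬ G.Adj u v

/-- The domination number of `G`. -/
noncomputable def domNum {V : Type*} [Fintype V] (G : SimpleGraph V) : ℕ :=
  sInf {k | ∃ D : Finset V, D.card = k ∧ DomSet G ↑D}

/-- The independence number of `G`. -/
noncomputable def indepNum {V : Type*} [Fintype V] (G : SimpleGraph V) : ℕ :=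
  sSup {k | ∃ S : Finset V, S.card = k ∧ IndepSet G ↑S}

/-- Sum of the first `k` entries `d_1 + ... + d_k` (0-indexed: indices `< k`). -/
def psum {n : ℕ} (d : Fin n → ℕ) (k : ℕ) : ℕ := ∑ i : Fin n, if (i : ℕ) < k then d i else 0

/-- Sum of the remaining entries `d_{k+1} + ... + d_n` (0-indexed: indices `≥ k`). -/
def ssum {n : ℕ} (d : Fin n → ℕ) (k : ℕ) : ℕ := ∑ i : Fin n, if k ≤ (i : ℕ) then d i else 0

/-- Slater's bound `sl(d) = min{k ∈ [n] : d_1 + ... + d_k ≥ n - k}`. -/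
noncomputable def slater (n : ℕ) (d : Fin n → ℕ) : ℕ := sInf {k | 1 ≤ k ∧ k ≤ n ∧ n - k ≤ psum d k}

/-- The annihilation number `a(d) = n - min{k ∈ [n] : Σ_{i≤k} d_i ≥ Σ_{i>k} d_i}`. -/
noncomputable def annih (n : ℕ) (d : Fin n → ℕ) : ℕ := n - sInf {k | 1 ≤ k ∧ k ≤ n ∧ ssum d k ≤ psum d k}

/-- The number of entries of `d` equal to `j`. -/
def nCount {n : ℕ} (d : Fin n → ℕ) (j : ℕ) : ℕ := (Finset.univ.filter fun i => d i = j).card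

/-- The number of entries of `d` that are at least `2`. -/
def nGe2 {n : ℕ} (d : Fin n → ℕ) : ℕ := (Finset.univ.filter fun i => 2 ≤ d i).card

/-- `F` is a forest realization of the degree sequence `d`. -/
def IsForestReal {n : ℕ} (d : Fin n → ℕ) (F : SimpleGraph (Fin n)) : Prop :=
  F.IsAcyclic ∧ ∀ i, deg F i = d i

/-- The minimum domination number over all forest realizations of `d`. -/
noncomputable def gammaFmin {n : ℕ} (d : Fin n → ℕ) : ℕ :=
  sInf {m | ∃ F : SimpleGraph (Fin n), IsForestReal d F ∧ domNum F = m}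

/-- The maximum independence number over all forest realizations of `d`. -/
noncomputable def alphaFmax {n : ℕ} (d : Fin n → ℕ) : ℕ :=
  sSup {m | ∃ F : SimpleGraph (Fin n), IsForestReal d F ∧ indepNum F = m}

namespace SimpleGraph

variable {V : Type*} [Fintype V] {G : SimpleGraph V}

lemma IsAcyclic.card_edgeFinset_lt_card [Nonempty V] [DecidableRel G.Adj] (hG : G.IsAcyclic) :
    #G.edgeFinset < Fintype.card V := by
  classical
  obtain ⟨T, hGT, hT⟩ := (⊤ : SimpleGraph V).exists_maximal_isAcyclic_of_le_isAcyclic le_top hG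
  have hTree : T.IsTree := T.maximal_isAcyclic_iff_isTree.mp (by simpa using hT)
  calc #G.edgeFinset ≤ #T.edgeFinset := card_le_card (edgeFinset_mono hGT)
    _ < Fintype.card V := by rw [← hTree.card_edgeFinset]; omega

-- For edgeless `G` both sides are `0`, by truncated subtraction.
lemma IsAcyclic.sum_degrees_le [DecidableRel G.Adj] (hG : G.IsAcyclic) :
    ∑ v, G.degree v ≤ 2 * #{v | 0 < G.degree v} - 2 := by
  rw [sum_degrees_eq_twice_card_edges]
  obtain hE | ⟨e, he⟩ := G.edgeFinset.eq_empty_or_nonempty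
  · simp [hE]
  have : Nonempty G.support := by
    induction e with
    | _ v w => exact ⟨⟨v, w, by simpa using he⟩⟩
  have hlt := (hG.induce G.support).card_edgeFinset_lt_card
  have hsupport : Fintype.card G.support = #{v | 0 < G.degree v} := by
    rw [← Set.toFinset_card]
    congr 1
    ext v
    simp [degree_pos_iff_mem_support]
  rw [card_edgeFinset_induce_support, hsupport] at hlt
  omega

variable [DecidableEq V] [DecidableRel G.Adj]

lemma degree_induce_eq_card_neighborFinset_inter (s : Finset V) (v : (s : Set V)) :
    (G.induce (s : Set V)).degree v = #(G.neighborFinset v ∩ s) := by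
  have h := congr_arg card (map_neighborFinset_induce (G := G) v)
  rw [card_map, toFinset_coe] at h
  rw [← h, card_neighborFinset_eq_degree]
  convert rfl

lemma IsAcyclic.sum_card_neighborFinset_inter_le (hG : G.IsAcyclic) (s : Finset V) :
    ∑ v ∈ s, #(G.neighborFinset v ∩ s) ≤ 2 * #{v ∈ s | 0 < #(G.neighborFinset v ∩ s)} - 2 := by
  have h := (hG.induce (s : Set V)).sum_degrees_le
  simp only [degree_induce_eq_card_neighborFinset_inter, card_filter] at h
  rwa [sum_finset_coe (fun v => #(G.neighborFinset v ∩ s)),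
    sum_finset_coe (fun v => if 0 < #(G.neighborFinset v ∩ s) then 1 else 0), ← card_filter] at h

variable (G)

lemma sum_card_neighborFinset_inter_comm (s t : Finset V) :
    ∑ v ∈ s, #(G.neighborFinset v ∩ t) = ∑ v ∈ t, #(G.neighborFinset v ∩ s) := by
  have h := sum_card_bipartiteAbove_eq_sum_card_bipartiteBelow (s := s) (t := t) G.Adj
  simp only [bipartiteAbove, bipartiteBelow] at h
  convert h using 3 with v _ v _
  · ext; simp [and_comm]
  · ext; simp [adj_comm, and_comm]

lemma degree_eq_card_inter_add_card_inter_compl (v : V) (D : Finset V) :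
    G.degree v = #(G.neighborFinset v ∩ D) + #(G.neighborFinset v ∩ Dᶜ) := by
  rw [← sdiff_eq_inter_compl, card_inter_add_card_sdiff, card_neighborFinset_eq_degree]

end SimpleGraph

section

open SimpleGraph

variable {V : Type*} [Fintype V] [DecidableEq V] {G : SimpleGraph V} [DecidableRel G.Adj]
  {D : Finset V}

lemma IndepSet.sum_degree_eq (hD : IndepSet G D) :
    ∑ v ∈ D, G.degree v = ∑ v ∈ Dᶜ, #(G.neighborFinset v ∩ D) := by
  rw [← sum_card_neighborFinset_inter_comm]
  refine sum_congr rfl fun v hv => ?_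
  have hvD : G.neighborFinset v ∩ D = ∅ :=
    eq_empty_of_forall_notMem fun u hu => by
      simp only [mem_inter, mem_neighborFinset] at hu
      exact hD v hv u hu.2 hu.1
  rw [degree_eq_card_inter_add_card_inter_compl G v D, hvD, card_empty, zero_add]

lemma IndepSet.sum_degree_compl_eq (hD : IndepSet G D) :
    ∑ v ∈ Dᶜ, G.degree v = ∑ v ∈ D, G.degree v + ∑ v ∈ Dᶜ, #(G.neighborFinset v ∩ Dᶜ) := by
  rw [hD.sum_degree_eq, ← sum_add_distrib]
  exact sum_congr rfl fun v _ => degree_eq_card_inter_add_card_inter_compl G v D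

lemma DomSet.card_compl_le_sum_card_neighborFinset_inter (hD : DomSet G D) :
    #Dᶜ ≤ ∑ v ∈ Dᶜ, #(G.neighborFinset v ∩ D) := by
  rw [card_eq_sum_ones]
  refine sum_le_sum fun v hv => card_pos.mpr ?_
  obtain ⟨u, hu, huv⟩ := hD v (by simpa using hv)
  exact ⟨u, by simpa [adj_comm] using And.intro huv hu⟩

lemma DomSet.two_le_degree (hD : DomSet G D) {v : V} (hv : v ∉ D)
    (hC : 0 < #(G.neighborFinset v ∩ Dᶜ)) : 2 ≤ G.degree v := by
  obtain ⟨u, hu, huv⟩ := hD v hv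
  have hD' : 0 < #(G.neighborFinset v ∩ D) :=
    card_pos.mpr ⟨u, by simpa [adj_comm] using And.intro huv hu⟩
  rw [degree_eq_card_inter_add_card_inter_compl G v D]
  omega

theorem SimpleGraph.IsAcyclic.sum_degree_compl_sub_sum_degree_le (hG : G.IsAcyclic)
    (hind : IndepSet G D) (hdom : DomSet G D) :
    ∑ v ∈ Dᶜ, G.degree v - ∑ v ∈ D, G.degree v ≤ 2 * #{v ∈ Dᶜ | 2 ≤ G.degree v} - 2 := by
  rw [hind.sum_degree_compl_eq, add_tsub_cancel_left]
  calc ∑ v ∈ Dᶜ, #(G.neighborFinset v ∩ Dᶜ)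
      ≤ 2 * #{v ∈ Dᶜ | 0 < #(G.neighborFinset v ∩ Dᶜ)} - 2 :=
        hG.sum_card_neighborFinset_inter_le Dᶜ
    _ ≤ 2 * #{v ∈ Dᶜ | 2 ≤ G.degree v} - 2 := by
      gcongr with v hv
      exact hdom.two_le_degree (by simpa using hv)

end

lemma deg_eq_degree {V : Type*} (G : SimpleGraph V) (v : V) [Fintype (G.neighborSet v)] :
    deg G v = G.degree v := by
  rw [deg, ← SimpleGraph.card_neighborSet_eq_degree, ← Nat.card_eq_fintype_card]
  rfl

section

variable {n : ℕ} (d : Fin n → ℕ) (k : ℕ)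

lemma psum_eq_sum_filter : psum d k = ∑ i ∈ {i : Fin n | (i : ℕ) < k}, d i := by
  rw [psum, sum_filter]

lemma ssum_eq_sum_compl_filter : ssum d k = ∑ i ∈ ({i | (i : ℕ) < k} : Finset (Fin n))ᶜ, d i := by
  rw [ssum, compl_filter, sum_filter]
  simp only [not_lt]

lemma card_compl_filter_val_lt : #({i | (i : ℕ) < k} : Finset (Fin n))ᶜ = n - k := by
  rw [card_compl, Fin.card_filter_val_lt, Fintype.card_fin]
  omega

variable {d} in
lemma card_filter_two_le_compl_le (hd : Antitone d) :
    #{i ∈ ({i | (i : ℕ) < k} : Finset (Fin n))ᶜ | 2 ≤ d i} ≤ nGe2 d - k := by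
  rw [← Nat.card_Ico]
  refine card_le_card_of_injOn Fin.val (fun i hi => ?_) Fin.val_injective.injOn
  simp only [coe_filter, mem_compl, mem_filter, mem_univ, true_and, not_lt] at hi
  exact mem_Ico.mpr ⟨hi.1, (Tuple.lt_card_ge_iff_apply_ge_of_antitone hd).mpr hi.2⟩

end

theorem stmt10_general {n : ℕ} (d : Fin n → ℕ) (hd : Antitone d)
    (k : ℕ)
    (F : SimpleGraph (Fin n)) (hF : IsForestReal d F)
    (hind : IndepSet F {i | (i : ℕ) < k}) (hdom : DomSet F {i | (i : ℕ) < k}) :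
    n - k ≤ psum d k ∧ psum d k ≤ ssum d k ∧
      ssum d k - psum d k ≤ 2 * (nGe2 d - k) - 2 := by
  classical
  obtain ⟨hacyclic, hdeg⟩ := hF
  have hdegree (i : Fin n) : F.degree i = d i := (deg_eq_degree F i).symm.trans (hdeg i)
  set D : Finset (Fin n) := {i | (i : ℕ) < k}
  have hDcoe : (D : Set (Fin n)) = {i : Fin n | (i : ℕ) < k} := by ext; simp [D]
  rw [← hDcoe] at hind hdom
  have hpsum : psum d k = ∑ v ∈ D, F.degree v := by simp only [psum_eq_sum_filter, hdegree, D]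
  have hssum : ssum d k = ∑ v ∈ Dᶜ, F.degree v := by
    simp only [ssum_eq_sum_compl_filter, hdegree, D]
  refine ⟨?_, ?_, ?_⟩
  · rw [hpsum, hind.sum_degree_eq, ← card_compl_filter_val_lt (n := n) k]
    exact hdom.card_compl_le_sum_card_neighborFinset_inter
  · rw [hpsum, hssum, hind.sum_degree_compl_eq]
    exact le_self_add
  · calc ssum d k - psum d k ≤ 2 * #{v ∈ Dᶜ | 2 ≤ F.degree v} - 2 := by
          rw [hpsum, hssum]
          exact hacyclic.sum_degree_compl_sub_sum_degree_le hind hdom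
      _ ≤ 2 * (nGe2 d - k) - 2 := by
          simp only [hdegree]
          gcongr
          exact card_filter_two_le_compl_le k hd

theorem stmt10 {n : ℕ} (d : Fin n → ℕ) (hd : Antitone d) (hpos : ∀ i, 1 ≤ d i)
    (heven : Even (∑ i, d i)) (hsum : ∑ i, d i ≤ 2 * n - 2)
    (k : ℕ) (hk1 : 1 ≤ k) (hkn : k ≤ n)
    (F : SimpleGraph (Fin n)) (hF : IsForestReal d F)
    (hind : IndepSet F {i | (i : ℕ) < k}) (hdom : DomSet F {i | (i : ℕ) < k}) :
    n - k ≤ psum d k ∧ psum d k ≤ ssum d k ∧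
      ssum d k - psum d k ≤ 2 * (nGe2 d - k) - 2 :=
  stmt10_general d hd k F hF hind hdom
end

section
/- Let d = (d_1, ..., d_n) be a non-increasing graphic sequence with d_n ≥ 1, and let k be the minimum of γ(G) over all realizations G of d. Then there exists a realization G of d with vertex set {u_1, ..., u_n}, d_G(u_i) = d_i for all i, such that both D = {u_1, ..., u_k} and its complement {u_{k+1}, ..., u_n} are dominating sets of G. -/
open Finset

/-! Fix a realization `G`, a dominating set `D`, and `u ∉ D`, `v ∈ D` with `deg v ≤ deg u`.
Exchanging the labels `u` and `v` and then moving `deg u - deg v` edges back from `v` to `u`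
preserves all degrees and makes `D - v + u` dominating, unless every `D`-neighbour of `u` has to
be among the moved edges. In that case `N(v) ⊆ N(u)` and `v` has no neighbour in `D`; then
either a 2-switch makes `D - v + u` dominating, or `N(v)` is a clique, and any `z ∈ N(v)` has
larger degree than `v` and can replace it in `D`.

For a non-increasing sequence each such exchange lowers the sum of the indices of `D`, so a
dominating set of size `k = min γ` can be moved to `{u_1, …, u_k}`. This is then a minimum
dominating set in a graph without isolated vertices, so each of its vertices has a neighbour
outside it: the complement dominates as well. -/

variable {V : Type*}

lemma deg_eq_ncard (G : SimpleGraph V) (v : V) : deg G v = (G.neighborSet v).ncard := rfl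

lemma exists_adj_of_deg_pos {G : SimpleGraph V} {v : V} (h : 0 < deg G v) : ∃ w, G.Adj v w :=
  let ⟨w⟩ := (Nat.card_pos_iff.1 h).1
  ⟨w.1, w.2⟩

lemma deg_comap_equiv (G : SimpleGraph V) (σ : V ≃ V) (v : V) :
    deg (G.comap σ) v = deg G (σ v) :=
  Nat.card_congr (σ.subtypeEquiv fun _ => Iff.rfl)

/-- Every edge `t a` with `t ∈ T` is replaced by the edge `t b`. -/
def moveEdges (G : SimpleGraph V) (a b : V) (T : Set V) : SimpleGraph V where
  Adj x y := (G.Adj x y ∧ ¬(x = a ∧ y ∈ T) ∧ ¬(y = a ∧ x ∈ T)) ∨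
    (x ≠ y ∧ ((x = b ∧ y ∈ T) ∨ (y = b ∧ x ∈ T)))
  symm := ⟨fun x y h => by
    rcases h with ⟨h, h₁, h₂⟩ | ⟨h, h'⟩
    · exact Or.inl ⟨h.symm, h₂, h₁⟩
    · exact Or.inr ⟨h.symm, h'.symm⟩⟩
  loopless := ⟨fun x h => by
    rcases h with ⟨h, -⟩ | ⟨h, -⟩
    · exact G.loopless.irrefl x h
    · exact h rfl⟩

section moveEdges

variable {G : SimpleGraph V} {a b : V} {T : Set V}

lemma moveEdges_adj {x y : V} : (moveEdges G a b T).Adj x y ↔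
    (G.Adj x y ∧ ¬(x = a ∧ y ∈ T) ∧ ¬(y = a ∧ x ∈ T)) ∨
      (x ≠ y ∧ ((x = b ∧ y ∈ T) ∨ (y = b ∧ x ∈ T))) :=
  Iff.rfl

lemma neighborSet_moveEdges_left (hT : T ⊆ G.neighborSet a \ insert b (G.neighborSet b)) :
    (moveEdges G a b T).neighborSet a = G.neighborSet a \ T := by
  ext y
  have hy := @hT y
  have ha := @hT a
  have := G.loopless.irrefl a
  simp only [SimpleGraph.mem_neighborSet, moveEdges_adj, Set.mem_sdiff,
    Set.mem_insert_iff] at hy ha ⊢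
  grind

lemma neighborSet_moveEdges_right (hT : T ⊆ G.neighborSet a \ insert b (G.neighborSet b)) :
    (moveEdges G a b T).neighborSet b = G.neighborSet b ∪ T := by
  ext y
  have hy := @hT y
  have hb := @hT b
  have := G.loopless.irrefl a
  simp only [SimpleGraph.mem_neighborSet, moveEdges_adj, Set.mem_sdiff, Set.mem_insert_iff,
    Set.mem_union] at hy hb ⊢
  grind

lemma neighborSet_moveEdges_of_mem (hT : T ⊆ G.neighborSet a \ insert b (G.neighborSet b))
    {t : V} (ht : t ∈ T) :
    (moveEdges G a b T).neighborSet t = insert b (G.neighborSet t \ {a}) := by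
  ext y
  have hy := @hT y
  have htab := hT ht
  have := G.loopless.irrefl a
  simp only [SimpleGraph.mem_neighborSet, moveEdges_adj, Set.mem_sdiff, Set.mem_insert_iff,
    Set.mem_singleton_iff] at hy htab ⊢
  grind [G.adj_comm]

lemma neighborSet_moveEdges_of_notMem {x : V} (ha : x ≠ a) (hb : x ≠ b) (hx : x ∉ T) :
    (moveEdges G a b T).neighborSet x = G.neighborSet x := by
  ext y
  simp only [SimpleGraph.mem_neighborSet, moveEdges_adj]
  grind

lemma deg_moveEdges_of_ne (hT : T ⊆ G.neighborSet a \ insert b (G.neighborSet b)) {x : V}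
    (ha : x ≠ a) (hb : x ≠ b) : deg (moveEdges G a b T) x = deg G x := by
  by_cases hx : x ∈ T
  · obtain ⟨hxa, hxb⟩ := hT hx
    rw [deg_eq_ncard, neighborSet_moveEdges_of_mem hT hx, Set.ncard_exchange, deg_eq_ncard]
    · exact fun h => hxb (Set.mem_insert_of_mem _ (G.adj_symm h))
    · exact G.adj_symm hxa
  · rw [deg_eq_ncard, neighborSet_moveEdges_of_notMem ha hb hx, deg_eq_ncard]

variable [Finite V]

lemma deg_moveEdges_left (hT : T ⊆ G.neighborSet a \ insert b (G.neighborSet b)) :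
    deg (moveEdges G a b T) a = deg G a - T.ncard := by
  rw [deg_eq_ncard, neighborSet_moveEdges_left hT, Set.ncard_sdiff (hT.trans Set.sdiff_subset),
    deg_eq_ncard]

lemma deg_moveEdges_right (hT : T ⊆ G.neighborSet a \ insert b (G.neighborSet b)) :
    deg (moveEdges G a b T) b = deg G b + T.ncard := by
  rw [deg_eq_ncard, neighborSet_moveEdges_right hT, Set.ncard_union_eq, deg_eq_ncard]
  exact Set.disjoint_left.2 fun y hy hyT => (hT hyT).2 (Set.mem_insert_of_mem _ hy)

end moveEdges

section Degree

variable [Finite V] {G : SimpleGraph V} {u v : V}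

lemma exists_switch {a b c e : V} (hab : G.Adj a b) (hce : G.Adj c e) (hac : ¬G.Adj a c)
    (hbe : ¬G.Adj b e) (hae : a ≠ e) (hbc : b ≠ c) (hac' : a ≠ c) (hbe' : b ≠ e) :
    ∃ G' : SimpleGraph V, (∀ x, deg G' x = deg G x) ∧ G'.Adj a c ∧ G'.Adj b e ∧
      ∀ x y, G.Adj x y → s(x, y) ≠ s(a, b) → s(x, y) ≠ s(c, e) → G'.Adj x y := by
  have h₁ : {b} ⊆ G.neighborSet a \ insert e (G.neighborSet e) := by
    simpa [hbe', G.adj_comm e b] using And.intro hab hbe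
  set G₁ := moveEdges G a e {b}
  have h₂ : {c} ⊆ G₁.neighborSet e \ insert a (G₁.neighborSet a) := by
    simp only [Set.singleton_subset_iff, Set.mem_sdiff, SimpleGraph.mem_neighborSet,
      Set.mem_insert_iff, G₁, moveEdges_adj, Set.mem_singleton_iff]
    grind [G.adj_comm, G.ne_of_adj]
  refine ⟨moveEdges G₁ e a {c}, fun x => ?_, ?_, ?_, ?_⟩
  · have ha : 0 < deg G a := Nat.card_pos_iff.2 ⟨⟨⟨b, hab⟩⟩, inferInstance⟩
    by_cases hxa : x = a
    · subst hxa
      rw [deg_moveEdges_right h₂, deg_moveEdges_left h₁]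
      simp only [Set.ncard_singleton]
      omega
    by_cases hxe : x = e
    · subst hxe
      rw [deg_moveEdges_left h₂, deg_moveEdges_right h₁]
      simp
    rw [deg_moveEdges_of_ne h₂ hxe hxa, deg_moveEdges_of_ne h₁ hxa hxe]
  all_goals
    simp only [G₁, moveEdges_adj, Set.mem_singleton_iff, ne_eq, Sym2.eq_iff]
    grind [G.adj_comm, G.ne_of_adj]

lemma ncard_neighborSet_inter_insert_le (G : SimpleGraph V) (u v : V) :
    (G.neighborSet u ∩ insert v (G.neighborSet v)).ncard ≤ deg G v := by
  rw [deg_eq_ncard]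
  by_cases huv : G.Adj u v
  · calc (G.neighborSet u ∩ insert v (G.neighborSet v)).ncard
        ≤ (insert v (G.neighborSet v) \ {u}).ncard :=
          Set.ncard_le_ncard fun y ⟨huy, hy⟩ => ⟨hy, (G.ne_of_adj huy).symm⟩
      _ = (G.neighborSet v).ncard := Set.ncard_exchange' G.irrefl (G.adj_symm huv)
  · refine Set.ncard_le_ncard fun y ⟨huy, hy⟩ => ?_
    rcases hy with rfl | hy
    · exact (huv huy).elim
    · exact hy

lemma deg_sub_deg_le_ncard_neighborSet_sdiff (G : SimpleGraph V) (u v : V) :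
    deg G u - deg G v ≤ (G.neighborSet u \ insert v (G.neighborSet v)).ncard := by
  have := ncard_neighborSet_inter_insert_le G u v
  have := Set.ncard_inter_add_ncard_sdiff_eq_ncard (G.neighborSet u) (insert v (G.neighborSet v))
  rw [deg_eq_ncard G u]
  omega

lemma neighborSet_subset_of_ncard_sdiff_eq (huv : ¬G.Adj u v) (hle : deg G v ≤ deg G u)
    (h : (G.neighborSet u \ insert v (G.neighborSet v)).ncard = deg G u - deg G v) :
    G.neighborSet v ⊆ G.neighborSet u := by
  have hcap : G.neighborSet u ∩ insert v (G.neighborSet v) ⊆ G.neighborSet v := by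
    rintro y ⟨huy, rfl | hy⟩
    · exact (huv huy).elim
    · exact hy
  have := Set.ncard_inter_add_ncard_sdiff_eq_ncard (G.neighborSet u) (insert v (G.neighborSet v))
  rw [← deg_eq_ncard] at this
  rw [← Set.eq_of_subset_of_ncard_le hcap (by rw [← deg_eq_ncard]; omega)]
  exact Set.inter_subset_left

lemma deg_lt_of_isClique (huv : u ≠ v) (hnadj : ¬G.Adj u v)
    (hsub : G.neighborSet v ⊆ G.neighborSet u) (hcl : G.IsClique (G.neighborSet v)) {z : V}
    (hvz : G.Adj v z) : deg G v < deg G z := by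
  have hN : insert u (insert v (G.neighborSet v \ {z})) ⊆ G.neighborSet z := by
    rintro y (rfl | rfl | ⟨hvy, hyz⟩)
    · exact G.adj_symm (hsub hvz)
    · exact G.adj_symm hvz
    · exact hcl hvz hvy (Ne.symm hyz)
  have := Set.ncard_le_ncard hN
  rw [Set.ncard_insert_of_notMem, Set.ncard_insert_of_notMem,
    Set.ncard_sdiff_singleton_of_mem (s := G.neighborSet v) hvz] at this
  · have : 0 < (G.neighborSet v).ncard := (Set.ncard_pos).2 ⟨z, hvz⟩
    rw [deg_eq_ncard, deg_eq_ncard]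
    omega
  · exact fun h => G.irrefl h.1
  · rintro (h | ⟨h, -⟩)
    · exact huv h
    · exact hnadj (G.adj_symm h)

end Degree

section DomSet

variable [DecidableEq V] {G G' : SimpleGraph V} {D : Finset V} {u v : V}

lemma DomSet.insert_erase (hD : DomSet G ↑D)
    (hN : ∀ x, x ≠ u → x ∉ D → G.Adj v x → G'.Adj u x)
    (hK : ∀ w ∈ D, w ≠ v → ∀ x, x ≠ u → x ∉ D → ¬G.Adj v x → G.Adj w x → G'.Adj w x)
    (hv : ∃ w ∈ insert u (D.erase v), G'.Adj w v) :
    DomSet G' ↑(insert u (D.erase v)) := by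
  intro x hx
  simp only [Finset.coe_insert, Finset.coe_erase, Set.mem_insert_iff, Set.mem_sdiff,
    Finset.mem_coe, Set.mem_singleton_iff, not_or, not_and_not_right] at hx
  obtain ⟨hxu, hxD⟩ := hx
  by_cases hxv : x = v
  · subst hxv
    exact hv
  replace hxD : x ∉ D := fun h => hxv (hxD h)
  by_cases hvx : G.Adj v x
  · exact ⟨u, Finset.mem_insert_self _ _, hN x hxu hxD hvx⟩
  obtain ⟨w, hwD, hwx⟩ := hD x hxD
  have hwv : w ≠ v := by rintro rfl; exact hvx hwx
  exact ⟨w, Finset.mem_insert_of_mem (Finset.mem_erase.2 ⟨hwv, hwD⟩),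
    hK w hwD hwv x hxu hxD hvx hwx⟩

lemma DomSet.insert_erase_of_isClique (hD : DomSet G ↑D) {z : V}
    (hcl : G.IsClique (G.neighborSet v)) (hvz : G.Adj v z) :
    DomSet G ↑(insert z (D.erase v)) :=
  hD.insert_erase (fun _ hxz _ hvx => hcl hvz hvx hxz.symm) (fun _ _ _ _ _ _ _ h => h)
    ⟨z, Finset.mem_insert_self _ _, G.adj_symm hvz⟩

lemma DomSet.erase (hD : DomSet G ↑D) (hv : ∀ w, G.Adj v w → w ∈ D) (hv₀ : ∃ w, G.Adj v w) :
    DomSet G ↑(D.erase v) := by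
  obtain ⟨z, hvz⟩ := hv₀
  have hz : z ∈ D.erase v := Finset.mem_erase.2 ⟨(G.ne_of_adj hvz).symm, hv z hvz⟩
  have := hD.insert_erase (G' := G) (u := z) (v := v)
    (fun x _ hxD hvx => (hxD (hv x hvx)).elim) (fun _ _ _ _ _ _ _ h => h)
    ⟨z, Finset.mem_insert_self _ _, G.adj_symm hvz⟩
  rwa [Finset.insert_eq_of_mem hz] at this

lemma DomSet.compl [Fintype V] (hD : DomSet G ↑D)
    (hmin : ∀ D' : Finset V, DomSet G ↑D' → #D ≤ #D') (hG : ∀ v, ∃ w, G.Adj v w) :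
    DomSet G (↑D)ᶜ := by
  intro v hv
  rw [Set.notMem_compl_iff, Finset.mem_coe] at hv
  by_contra! h
  have hN : ∀ w, G.Adj v w → w ∈ D := fun w hvw => by
    by_contra hw
    exact h w hw (G.adj_symm hvw)
  have := hmin _ (hD.erase hN (hG v))
  rw [Finset.card_erase_of_mem hv] at this
  have := Finset.card_pos.2 ⟨v, hv⟩
  omega

end DomSet

section Exchange

variable [Finite V] [DecidableEq V] {G : SimpleGraph V} {D : Finset V} {u v : V}

lemma exists_domSet_insert_erase_swap (hD : DomSet G ↑D) (hu : u ∉ D) (hv : v ∈ D)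
    (hle : deg G v ≤ deg G u) {T : Set V} (hT : T ⊆ G.neighborSet u \ insert v (G.neighborSet v))
    (hTcard : T.ncard = deg G u - deg G v)
    (hvu : G.Adj u v ∨ ∃ w ∈ D.erase v, G.Adj u w ∧ w ∉ T) :
    ∃ G' : SimpleGraph V, (∀ x, deg G' x = deg G x) ∧ DomSet G' ↑(insert u (D.erase v)) := by
  have huv : u ≠ v := by rintro rfl; exact hu hv
  set σ := Equiv.swap u v
  set G₁ := G.comap σ
  have hσ : ∀ x, x ≠ u → x ≠ v → σ x = x := fun x => Equiv.swap_apply_of_ne_of_ne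
  have hTu : ∀ t ∈ T, t ≠ u := fun t ht => (G.ne_of_adj (hT ht).1).symm
  have hTv : ∀ t ∈ T, t ≠ v := fun t ht h => (hT ht).2 (Or.inl h)
  have hT₁ : T ⊆ G₁.neighborSet v \ insert u (G₁.neighborSet u) := by
    intro t ht
    have := hT ht
    simp only [Set.mem_sdiff, SimpleGraph.mem_neighborSet, Set.mem_insert_iff, G₁,
      SimpleGraph.comap_adj, Equiv.swap_apply_left, Equiv.swap_apply_right, σ,
      hσ t (hTu t ht) (hTv t ht)] at this ⊢
    tauto
  refine ⟨moveEdges G₁ v u T, fun x => ?_, hD.insert_erase ?_ ?_ ?_⟩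
  · by_cases hxu : x = u
    · subst hxu
      rw [deg_moveEdges_right hT₁, deg_comap_equiv, Equiv.swap_apply_left]
      omega
    by_cases hxv : x = v
    · subst hxv
      rw [deg_moveEdges_left hT₁, deg_comap_equiv, Equiv.swap_apply_right]
      omega
    rw [deg_moveEdges_of_ne hT₁ hxv hxu, deg_comap_equiv, hσ x hxu hxv]
  · intro x hxu _ hvx
    have hxv : x ≠ v := (G.ne_of_adj hvx).symm
    simp only [moveEdges_adj, G₁, SimpleGraph.comap_adj, Equiv.swap_apply_left, σ,
      hσ x hxu hxv]
    tauto
  · intro w hwD hwv x hxu hxD _ hwx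
    have hwu : w ≠ u := by rintro rfl; exact hu hwD
    have hxv : x ≠ v := by rintro rfl; exact hxD hv
    simp only [moveEdges_adj, G₁, SimpleGraph.comap_adj, σ, hσ x hxu hxv, hσ w hwu hwv]
    tauto
  · rcases hvu with huv' | ⟨w, hw, huw, hwT⟩
    · refine ⟨u, Finset.mem_insert_self _ _, ?_⟩
      simp only [moveEdges_adj, G₁, SimpleGraph.comap_adj, Equiv.swap_apply_left,
        Equiv.swap_apply_right, σ]
      exact Or.inl ⟨G.adj_symm huv', fun h => huv h.1, fun h => hTu u h.2 rfl⟩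
    · obtain ⟨hwv, hwD⟩ := Finset.mem_erase.1 hw
      have hwu : w ≠ u := by rintro rfl; exact hu hwD
      refine ⟨w, Finset.mem_insert_of_mem hw, ?_⟩
      simp only [moveEdges_adj, G₁, SimpleGraph.comap_adj, Equiv.swap_apply_right, σ,
        hσ w hwu hwv]
      exact Or.inl ⟨G.adj_symm huw, fun h => hwv h.1, fun h => hwT h.2⟩

lemma exists_domSet_insert_erase_of_not_adj (hD : DomSet G ↑D) (hu : u ∉ D) (hv : v ∈ D)
    {w₀ z : V} (hw₀ : w₀ ∈ D) (huw₀ : G.Adj u w₀) (huv : ¬G.Adj u v)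
    (hsub : G.neighborSet v ⊆ G.neighborSet u) (hvD : ∀ w ∈ D, ¬G.Adj v w)
    (hvz : G.Adj v z) (hw₀z : ¬G.Adj w₀ z) :
    ∃ G' : SimpleGraph V, (∀ x, deg G' x = deg G x) ∧ DomSet G' ↑(insert u (D.erase v)) := by
  have hne : ∀ {x y}, x ∈ D → y ∉ D → x ≠ y := fun hx hy h => hy (h ▸ hx)
  have huz : G.Adj u z := hsub hvz
  have hzD : z ∉ D := fun h => hvD z h hvz
  obtain ⟨G', hdeg, huv', -, hkeep⟩ := exists_switch huw₀ hvz huv hw₀z (G.ne_of_adj huz)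
    (fun h => huv (h ▸ huw₀)) (hne hv hu).symm (hne hw₀ hzD)
  refine ⟨G', hdeg, hD.insert_erase (fun x hxu hxD hvx => ?_)
    (fun w hwD hwv x hxu hxD _ hwx => ?_) ⟨u, Finset.mem_insert_self _ _, huv'⟩⟩
  · refine hkeep u x (hsub hvx) ?_ ?_ <;> simp only [ne_eq, Sym2.eq_iff] <;>
      grind [G.ne_of_adj]
  · refine hkeep w x hwx ?_ ?_ <;> simp only [ne_eq, Sym2.eq_iff] <;> grind

lemma exists_domSet_insert_erase_of_not_isClique (hD : DomSet G ↑D) (hu : u ∉ D) (hv : v ∈ D)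
    {w₀ z z' : V} (hw₀ : w₀ ∈ D.erase v) (hsub : G.neighborSet v ⊆ G.neighborSet u)
    (hvD : ∀ w ∈ D, ¬G.Adj v w) (hw₀N : G.neighborSet v ⊆ G.neighborSet w₀)
    (hvz : G.Adj v z) (hvz' : G.Adj v z') (hzz' : z ≠ z') (hnzz' : ¬G.Adj z z') :
    ∃ G' : SimpleGraph V, (∀ x, deg G' x = deg G x) ∧ DomSet G' ↑(insert u (D.erase v)) := by
  obtain ⟨hw₀v, hw₀D⟩ := Finset.mem_erase.1 hw₀
  have hzD : z ∉ D := fun h => hvD z h hvz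
  have hz'D : z' ∉ D := fun h => hvD z' h hvz'
  obtain ⟨G', hdeg, hvw₀, -, hkeep⟩ := exists_switch hvz (hw₀N hvz') (hvD w₀ hw₀D) hnzz'
    (G.ne_of_adj hvz') (fun h => hzD (h ▸ hw₀D)) hw₀v.symm hzz'
  have huz : G.Adj u z := hsub hvz
  have huz' : G.Adj u z' := hsub hvz'
  refine ⟨G', hdeg, hD.insert_erase (fun x hxu hxD hvx => ?_)
    (fun w hwD hwv x hxu hxD hvx hwx => ?_) ⟨w₀, Finset.mem_insert_of_mem hw₀, hvw₀.symm⟩⟩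
  · refine hkeep u x (hsub hvx) ?_ ?_ <;> simp only [ne_eq, Sym2.eq_iff] <;>
      grind [G.ne_of_adj]
  · refine hkeep w x hwx ?_ ?_ <;> simp only [ne_eq, Sym2.eq_iff] <;> grind

lemma exists_exchange_of_neighborSet_subset (hD : DomSet G ↑D) (hu : u ∉ D) (hv : v ∈ D)
    {w₀ : V} (hw₀ : w₀ ∈ D.erase v) (huw₀ : G.Adj u w₀) (huv : ¬G.Adj u v)
    (hsub : G.neighborSet v ⊆ G.neighborSet u) (hvD : ∀ w ∈ D, ¬G.Adj v w)
    (hv₀ : ∃ z, G.Adj v z) :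
    ∃ (G' : SimpleGraph V) (x : V), (∀ y, deg G' y = deg G y) ∧ x ∉ D ∧
      (x = u ∨ deg G v < deg G x) ∧ DomSet G' ↑(insert x (D.erase v)) := by
  by_cases hw₀N : ∃ z, G.Adj v z ∧ ¬G.Adj w₀ z
  · obtain ⟨z, hvz, hw₀z⟩ := hw₀N
    obtain ⟨G', hdeg, hdom⟩ := exists_domSet_insert_erase_of_not_adj hD hu hv
      (Finset.mem_of_mem_erase hw₀) huw₀ huv hsub hvD hvz hw₀z
    exact ⟨G', u, hdeg, hu, Or.inl rfl, hdom⟩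
  push Not at hw₀N
  by_cases hcl : G.IsClique (G.neighborSet v)
  · obtain ⟨z, hvz⟩ := hv₀
    have huv' : u ≠ v := by rintro rfl; exact hu hv
    exact ⟨G, z, fun _ => rfl, fun h => hvD z h hvz,
      Or.inr (deg_lt_of_isClique huv' huv hsub hcl hvz), hD.insert_erase_of_isClique hcl hvz⟩
  obtain ⟨z, hvz, z', hvz', hzz', hnzz'⟩ :
      ∃ z, G.Adj v z ∧ ∃ z', G.Adj v z' ∧ z ≠ z' ∧ ¬G.Adj z z' := by
    simpa [SimpleGraph.IsClique, Set.Pairwise] using hcl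
  obtain ⟨G', hdeg, hdom⟩ := exists_domSet_insert_erase_of_not_isClique hD hu hv hw₀ hsub hvD
    (fun y hy => hw₀N y hy) hvz hvz' hzz' hnzz'
  exact ⟨G', u, hdeg, hu, Or.inl rfl, hdom⟩

lemma exists_exchange (hD : DomSet G ↑D) (hu : u ∉ D) (hv : v ∈ D) (hle : deg G v ≤ deg G u)
    (hv₀ : 0 < deg G v) :
    ∃ (G' : SimpleGraph V) (x : V), (∀ y, deg G' y = deg G y) ∧ x ∉ D ∧
      (x = u ∨ deg G v < deg G x) ∧ DomSet G' ↑(insert x (D.erase v)) := by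
  have hP := deg_sub_deg_le_ncard_neighborSet_sdiff G u v
  set P := G.neighborSet u \ insert v (G.neighborSet v)
  by_cases hA : G.Adj u v ∨ ∃ w ∈ D.erase v, G.Adj u w ∧ deg G u - deg G v ≤ (P \ {w}).ncard
  · obtain ⟨T, hTP, hT, hvu⟩ : ∃ T ⊆ P, T.ncard = deg G u - deg G v ∧
        (G.Adj u v ∨ ∃ w ∈ D.erase v, G.Adj u w ∧ w ∉ T) := by
      rcases hA with huv | ⟨w, hw, huw, hcard⟩
      · obtain ⟨T, hTP, hT⟩ := Set.exists_subset_card_eq hP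
        exact ⟨T, hTP, hT, Or.inl huv⟩
      · obtain ⟨T, hTP, hT⟩ := Set.exists_subset_card_eq hcard
        exact ⟨T, hTP.trans Set.sdiff_subset, hT, Or.inr ⟨w, hw, huw, fun h => (hTP h).2 rfl⟩⟩
    obtain ⟨G', hdeg, hdom⟩ := exists_domSet_insert_erase_swap hD hu hv hle hTP hT hvu
    exact ⟨G', u, hdeg, hu, Or.inl rfl, hdom⟩
  push Not at hA
  obtain ⟨huv, hsmall⟩ := hA
  have hPw : ∀ w ∈ D.erase v, G.Adj u w → w ∈ P ∧ P.ncard = deg G u - deg G v := by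
    intro w hw huw
    have h := hsmall w hw huw
    by_cases hwP : w ∈ P
    · rw [Set.ncard_sdiff_singleton_of_mem hwP] at h
      exact ⟨hwP, by omega⟩
    · rw [Set.sdiff_singleton_eq_self hwP] at h
      omega
  obtain ⟨w₀, hw₀D, hw₀u⟩ := hD u hu
  have hw₀ : w₀ ∈ D.erase v := Finset.mem_erase.2 ⟨fun h => huv (h ▸ hw₀u.symm), hw₀D⟩
  have hsub := neighborSet_subset_of_ncard_sdiff_eq huv hle (hPw w₀ hw₀ hw₀u.symm).2
  have hvD : ∀ w ∈ D, ¬G.Adj v w := by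
    intro w hwD hvw
    have hw : w ∈ D.erase v := Finset.mem_erase.2 ⟨(G.ne_of_adj hvw).symm, hwD⟩
    exact (hPw w hw (hsub hvw)).1.2 (Set.mem_insert_of_mem _ hvw)
  exact exists_exchange_of_neighborSet_subset hD hu hv hw₀ hw₀u.symm huv hsub hvD
    (exists_adj_of_deg_pos hv₀)

end Exchange

section Fin

variable {n : ℕ}

lemma Finset.coe_eq_setOf_val_lt_card_of_isLowerSet {D : Finset (Fin n)}
    (hD : IsLowerSet (D : Set (Fin n))) : (D : Set (Fin n)) = {i : Fin n | (i : ℕ) < #D} := by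
  ext i
  simp only [Finset.mem_coe, Set.mem_ofPred_eq]
  constructor
  · intro hi
    have := Finset.card_le_card fun j hj => hD (Finset.mem_Iic.1 hj) hi
    rw [Fin.card_Iic] at this
    omega
  · intro hi
    by_contra hiD
    have := Finset.card_le_card fun j (hj : j ∈ D) =>
      Finset.mem_Iio.2 (lt_of_not_ge fun hij => hiD (hD hij hj))
    rw [Fin.card_Iio] at this
    omega

lemma exists_isLowerSet_domSet {d : Fin n → ℕ} (hd : Antitone d) (hpos : ∀ i, 1 ≤ d i)
    {G : SimpleGraph (Fin n)} (hG : ∀ i, deg G i = d i) {D : Finset (Fin n)}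
    (hD : DomSet G ↑D) :
    ∃ (G' : SimpleGraph (Fin n)) (D' : Finset (Fin n)), (∀ i, deg G' i = d i) ∧
      DomSet G' ↑D' ∧ #D' = #D ∧ IsLowerSet (D' : Set (Fin n)) := by
  induction hs : ∑ i ∈ D, (i : ℕ) using Nat.strong_induction_on generalizing G D with
  | _ s ih =>
  by_cases hlow : IsLowerSet (D : Set (Fin n))
  · exact ⟨G, D, hG, hD, rfl, hlow⟩
  obtain ⟨v, u, huv, hv, hu⟩ : ∃ v u, u < v ∧ v ∈ D ∧ u ∉ D := by
    simp only [IsLowerSet, Finset.mem_coe, not_forall] at hlow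
    obtain ⟨v, u, huv, hv, hu⟩ := hlow
    exact ⟨v, u, lt_of_le_of_ne huv (by rintro rfl; exact hu hv), hv, hu⟩
  obtain ⟨G₁, x, hdeg, hxD, hx, hdom⟩ :=
    exists_exchange hD hu hv (by rw [hG, hG]; exact hd huv.le) (by rw [hG]; exact hpos v)
  have hxv : x < v := by
    rcases hx with rfl | h
    · exact huv
    · rw [hG, hG] at h
      exact hd.reflect_lt h
  have hxD' : x ∉ D.erase v := fun h => hxD (Finset.mem_of_mem_erase h)
  have hsum : ∑ i ∈ insert x (D.erase v), (i : ℕ) < s := by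
    rw [Finset.sum_insert hxD', ← hs, ← Finset.sum_erase_add _ _ hv]
    have : (x : ℕ) < v := hxv
    omega
  obtain ⟨G', D', hG', hD', hcard, hlow'⟩ :=
    ih _ hsum (fun i => (hdeg i).trans (hG i)) hdom rfl
  refine ⟨G', D', hG', hD', ?_, hlow'⟩
  rw [hcard, Finset.card_insert_of_notMem hxD', Finset.card_erase_add_one hv]

end Fin

lemma domNum_le_card [Fintype V] {G : SimpleGraph V} {D : Finset V} (hD : DomSet G ↑D) :
    domNum G ≤ #D :=
  Nat.sInf_le (s := {k | ∃ D : Finset V, #D = k ∧ DomSet G ↑D}) ⟨D, rfl, hD⟩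

lemma exists_domSet_card_eq_domNum [Fintype V] (G : SimpleGraph V) :
    ∃ D : Finset V, #D = domNum G ∧ DomSet G ↑D :=
  Nat.sInf_mem (s := {k | ∃ D : Finset V, #D = k ∧ DomSet G ↑D})
    ⟨_, Finset.univ, rfl, fun v hv => (hv (Finset.mem_coe.2 (Finset.mem_univ v))).elim⟩

theorem stmt13 {n : ℕ} (d : Fin n → ℕ) (hd : Antitone d) (hpos : ∀ i, 1 ≤ d i)
    (hgraphic : ∃ G : SimpleGraph (Fin n), ∀ i, deg G i = d i) (k : ℕ)
    (hk : k = sInf {m | ∃ G : SimpleGraph (Fin n), (∀ i, deg G i = d i) ∧ domNum G = m}) :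
    ∃ G : SimpleGraph (Fin n), (∀ i, deg G i = d i) ∧
      DomSet G {i | (i : ℕ) < k} ∧ DomSet G {i | k ≤ (i : ℕ)} := by
  obtain ⟨G₀, hG₀, hk₀⟩ :
      k ∈ {m | ∃ G : SimpleGraph (Fin n), (∀ i, deg G i = d i) ∧ domNum G = m} := by
    obtain ⟨G, hG⟩ := hgraphic
    exact hk ▸ Nat.sInf_mem ⟨_, G, hG, rfl⟩
  have hmin : ∀ G : SimpleGraph (Fin n), (∀ i, deg G i = d i) →
      ∀ D : Finset (Fin n), DomSet G ↑D → k ≤ #D := fun G hG D hD =>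
    (hk ▸ Nat.sInf_le ⟨G, hG, rfl⟩ : k ≤ domNum G).trans (domNum_le_card hD)
  obtain ⟨D₀, hD₀card, hD₀⟩ := exists_domSet_card_eq_domNum G₀
  obtain ⟨G, D, hG, hD, hDcard, hlow⟩ := exists_isLowerSet_domSet hd hpos hG₀ hD₀
  rw [hD₀card, hk₀] at hDcard
  have hDk : (D : Set (Fin n)) = {i : Fin n | (i : ℕ) < k} := by
    rw [Finset.coe_eq_setOf_val_lt_card_of_isLowerSet hlow, hDcard]
  have hcompl : {i : Fin n | k ≤ (i : ℕ)} = (D : Set (Fin n))ᶜ := by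
    ext i
    simp [hDk]
  refine ⟨G, hG, hDk ▸ hD, hcompl ▸ hD.compl (fun D' hD' => ?_) fun i => ?_⟩
  · exact hDcard ▸ hmin G hG D' hD'
  · exact exists_adj_of_deg_pos ((hG i).symm ▸ hpos i)
end

section
/- Let d = (d_1, ..., d_n) be a non-increasing degree sequence of a forest with all entries positive, and let k_γ = min{k ∈ [n] : Σ_{i=1}^k d_i ≥ Σ_{i=k+1}^n d_i}. Then Σ_{i=1}^{k_γ} d_i = Σ_{i=k_γ+1}^n d_i whenever either k_γ = n_{≥2}(d) and n_1(d) ≥ Σ_{i=1}^{n_{≥2}(d)} d_i, or k_γ > n_{≥2}(d). -/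
open Finset

/-!
Crossing an entry equal to `1` lowers `ssum d k - psum d k` by exactly `2`, and this difference
always has the parity of the total degree, which is even. If `k_γ > n_{≥2}(d)`, the step into `k_γ`
crosses a unit entry from a strictly negative balance, so evenness forbids overshooting past `0`. If
`k_γ = n_{≥2}(d)`, the tail consists exactly of the `n_1(d)` unit entries and the claim is immediate.
-/

section PartialSums

variable {n : ℕ} (d : Fin n → ℕ)

lemma psum_add_ssum (k : ℕ) : psum d k + ssum d k = ∑ i, d i := by
  rw [psum, ssum, ← Finset.sum_add_distrib]
  refine Finset.sum_congr rfl fun i _ => ?_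
  by_cases h : (i : ℕ) < k
  · simp [h, Nat.not_le.mpr h]
  · simp [h, Nat.le_of_not_lt h]

lemma psum_succ {k : ℕ} (hk : k < n) : psum d (k + 1) = psum d k + d ⟨k, hk⟩ := by
  have hsplit : ∀ i : Fin n, (if (i : ℕ) < k + 1 then d i else 0)
      = (if (i : ℕ) < k then d i else 0) + (if i = ⟨k, hk⟩ then d i else 0) := by
    intro i
    by_cases hi : i = ⟨k, hk⟩
    · subst hi; simp
    · have : (i : ℕ) ≠ k := fun he => hi (Fin.ext he)
      by_cases hlt : (i : ℕ) < k
      · simp [hlt, hi, Nat.lt_succ_of_lt hlt]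
      · simp [hlt, hi, show ¬ (i : ℕ) < k + 1 by omega]
  rw [psum, psum, Finset.sum_congr rfl fun i _ => hsplit i, Finset.sum_add_distrib,
    Finset.sum_ite_eq' Finset.univ (⟨k, hk⟩ : Fin n)]
  simp

lemma ssum_eq_add_ssum_succ {k : ℕ} (hk : k < n) : ssum d k = d ⟨k, hk⟩ + ssum d (k + 1) := by
  have := psum_add_ssum d k
  have := psum_add_ssum d (k + 1)
  have := psum_succ d hk
  omega

lemma psum_zero : psum d 0 = 0 := by
  simp [psum]

lemma ssum_eq_zero_of_le {k : ℕ} (hk : n ≤ k) : ssum d k = 0 :=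
  Finset.sum_eq_zero fun i _ => if_neg (by omega)

lemma psum_succ_eq_ssum_succ_of_even (heven : Even (∑ i, d i)) {m : ℕ} (hm : m < n)
    (hunit : d ⟨m, hm⟩ = 1) (hlt : psum d m < ssum d m)
    (hle : ssum d (m + 1) ≤ psum d (m + 1)) : psum d (m + 1) = ssum d (m + 1) := by
  have := psum_add_ssum d m
  have := psum_add_ssum d (m + 1)
  have := psum_succ d hm
  obtain ⟨t, ht⟩ := heven
  omega

end PartialSums

section BalanceIndex

variable {n : ℕ} (d : Fin n → ℕ)

def balanceSet : Set ℕ := {k | 1 ≤ k ∧ k ≤ n ∧ ssum d k ≤ psum d k}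

/-- The paper's `k_γ`; for `n = 0` the set is empty and `sInf ∅ = 0`. -/
noncomputable def balanceIndex : ℕ := sInf (balanceSet d)

lemma self_mem_balanceSet (hn : 0 < n) : n ∈ balanceSet d :=
  ⟨hn, le_rfl, by simp [ssum_eq_zero_of_le d le_rfl]⟩

lemma balanceIndex_le : balanceIndex d ≤ n := by
  rcases Nat.eq_zero_or_pos n with rfl | hn
  · exact (Nat.sInf_eq_zero.mpr <| .inr <| Set.eq_empty_of_forall_notMem fun _ hk => by
      have := hk.1; have := hk.2.1; omega).le
  · exact Nat.sInf_le (self_mem_balanceSet d hn)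

lemma ssum_balanceIndex_le_psum :
    ssum d (balanceIndex d) ≤ psum d (balanceIndex d) := by
  rcases Nat.eq_zero_or_pos n with rfl | hn
  · simp [ssum]
  · exact (Nat.sInf_mem ⟨n, self_mem_balanceSet d hn⟩).2.2

lemma psum_lt_ssum_of_lt_balanceIndex {m : ℕ} (hm : m < balanceIndex d) (hs : 0 < ssum d m) :
    psum d m < ssum d m := by
  by_contra! hle
  rcases Nat.eq_zero_or_pos m with rfl | hm0
  · rw [psum_zero] at hle
    omega
  · have hmn : m ≤ n := by
      by_contra! hnm
      rw [ssum_eq_zero_of_le d hnm.le] at hs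
      omega
    exact Nat.notMem_of_lt_sInf hm ⟨hm0, hmn, hle⟩

end BalanceIndex

lemma le_apply_iff_lt_card_filter {α : Type*} [Preorder α] [DecidableLE α] {n : ℕ}
    {f : Fin n → α} (hf : Antitone f) (t : α) (i : Fin n) :
    t ≤ f i ↔ (i : ℕ) < (univ.filter fun j => t ≤ f j).card := by
  constructor
  · intro hi
    have hsub : Finset.Iic i ⊆ univ.filter fun j => t ≤ f j := fun j hj =>
      Finset.mem_filter.mpr ⟨Finset.mem_univ _, hi.trans (hf (Finset.mem_Iic.mp hj))⟩
    have := Finset.card_le_card hsub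
    rw [Fin.card_Iic] at this
    omega
  · intro hi
    by_contra hti
    have hsub : (univ.filter fun j => t ≤ f j) ⊆ Finset.Iio i := fun j hj => by
      rw [Finset.mem_Iio]
      by_contra hji
      exact hti ((Finset.mem_filter.mp hj).2.trans (hf (le_of_not_gt hji)))
    have := Finset.card_le_card hsub
    rw [Fin.card_Iio] at this
    omega

lemma ssum_nGe2_eq_nCount_one {n : ℕ} {d : Fin n → ℕ} (hd : Antitone d) (hpos : ∀ i, 1 ≤ d i) :
    ssum d (nGe2 d) = nCount d 1 := by
  have hunit : ∀ i : Fin n, nGe2 d ≤ (i : ℕ) ↔ d i = 1 := fun i => by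
    have hlarge : 2 ≤ d i ↔ (i : ℕ) < nGe2 d := le_apply_iff_lt_card_filter hd 2 i
    have := hpos i
    omega
  rw [ssum, nCount, Finset.card_filter]
  refine Finset.sum_congr rfl fun i _ => ?_
  by_cases hi : d i = 1 <;> simp [hunit, hi]

lemma even_sum_deg {V : Type*} [Fintype V] (G : SimpleGraph V) : Even (∑ v, deg G v) := by
  classical
  have hdeg : ∀ v, deg G v = G.degree v := fun v => by
    rw [← SimpleGraph.card_neighborSet_eq_degree, deg, Nat.card_eq_fintype_card]
    rfl
  simp only [hdeg, SimpleGraph.sum_degrees_eq_twice_card_edges]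
  exact even_two_mul _

theorem stmt17 {n : ℕ} (d : Fin n → ℕ) (hd : Antitone d) (hpos : ∀ i, 1 ≤ d i)
    (hreal : ∃ F : SimpleGraph (Fin n), IsForestReal d F)
    (kγ : ℕ) (hkγ : kγ = sInf {k | 1 ≤ k ∧ k ≤ n ∧ ssum d k ≤ psum d k})
    (h : (kγ = nGe2 d ∧ psum d (nGe2 d) ≤ nCount d 1) ∨ nGe2 d < kγ) :
    psum d kγ = ssum d kγ := by
  change kγ = balanceIndex d at hkγ
  have hle := ssum_balanceIndex_le_psum d
  rw [← hkγ] at hle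
  rcases h with ⟨rfl, hcount⟩ | hlt
  · rw [ssum_nGe2_eq_nCount_one hd hpos] at hle ⊢
    omega
  · obtain ⟨F, -, hdeg⟩ := hreal
    have heven : Even (∑ i, d i) := by simpa only [hdeg] using even_sum_deg F
    obtain ⟨m, rfl⟩ : ∃ m, kγ = m + 1 := Nat.exists_eq_add_one.mpr (by omega)
    have hmn : m < n := by
      have := balanceIndex_le d
      omega
    have hunit : d ⟨m, hmn⟩ = 1 := by
      have hlarge : 2 ≤ d ⟨m, hmn⟩ ↔ m < nGe2 d := le_apply_iff_lt_card_filter hd 2 ⟨m, hmn⟩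
      have := hpos ⟨m, hmn⟩
      omega
    have hs : 0 < ssum d m := by rw [ssum_eq_add_ssum_succ d hmn, hunit]; omega
    exact psum_succ_eq_ssum_succ_of_even d heven hmn hunit
      (psum_lt_ssum_of_lt_balanceIndex d (by omega) hs) hle
end
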